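/- Let K be a field and G a chordal graph on the vertex set [n] such that [n] is the disjoint union of the facets F_1,...,F_m of Δ(G) admitting a free vertex. For i = 1,...,m set y_i = Σ_{j ∈ F_i} x_j in S = K[x_1,...,x_n]. Then y_1,...,y_m is a regular sequence on S/I(G). -/

import Mathlib

set_option maxHeartbeats 1000000
set_option synthInstance.maxHeartbeats 400000

open MvPolynomial

/-- A simple graph is chordal if every cycle of length > 3 has a chord, i.e. an edge of the
graph joining two vertices of the cycle which is not an edge of the cycle. -/
def SimpleGraph.IsChordal {V : Type*} (G : SimpleGraph V) : Prop :=
  ∀ (v : V) (c : G.Walk v v), c.IsCycle → 3 < c.length →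
    ∃ u w, u ∈ c.support ∧ w ∈ c.support ∧ G.Adj u w ∧ s(u, w) ∉ c.edges

/-- `F` is a facet of the clique complex `Δ(G)`, i.e. a maximal clique of `G`. -/
def SimpleGraph.IsFacet {V : Type*} (G : SimpleGraph V) (F : Finset V) : Prop :=
  G.IsClique (F : Set V) ∧ ∀ F' : Finset V, G.IsClique (F' : Set V) → F ⊆ F' → F' = F

/-- `v` is a free vertex of the facet `F` of `Δ(G)`: it belongs to no other facet. -/
def SimpleGraph.IsFreeVertex {V : Type*} (G : SimpleGraph V) (F : Finset V) (v : V) : Prop :=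
  v ∈ F ∧ ∀ F' : Finset V, G.IsFacet F' → v ∈ F' → F' = F

/-- `F` is a facet of `Δ(G)` admitting a free vertex. -/
def SimpleGraph.IsFreeFacet {V : Type*} (G : SimpleGraph V) (F : Finset V) : Prop :=
  G.IsFacet F ∧ ∃ v, G.IsFreeVertex F v

/-- A vertex cover of `G`: a set of vertices meeting every edge. -/
def SimpleGraph.IsFinsetVertexCover {V : Type*} (G : SimpleGraph V) (C : Finset V) : Prop :=
  ∀ u w, G.Adj u w → u ∈ C ∨ w ∈ C

/-- A minimal vertex cover of `G`: no proper subset is a vertex cover. -/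
def SimpleGraph.IsMinVertexCover {V : Type*} (G : SimpleGraph V) (C : Finset V) : Prop :=
  G.IsFinsetVertexCover C ∧ ∀ C' ⊆ C, G.IsFinsetVertexCover C' → C' = C

/-- `G` is unmixed: all minimal vertex covers of `G` have the same cardinality. -/
def SimpleGraph.Unmixed {V : Type*} (G : SimpleGraph V) : Prop :=
  ∀ C C' : Finset V, G.IsMinVertexCover C → G.IsMinVertexCover C' → C.card = C'.card

/-- The edge ideal `I(G) ⊆ K[x_1,…,x_n]` of a graph `G` on `[n]`, generated by the
monomials `x_i x_j` with `{i,j}` an edge of `G`. -/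
noncomputable def edgeIdeal (K : Type*) [CommRing K] {n : ℕ} (G : SimpleGraph (Fin n)) :
    Ideal (MvPolynomial (Fin n) K) :=
  Ideal.span {p | ∃ i j : Fin n, G.Adj i j ∧ p = X i * X j}


/-!
Choose a free vertex `v_i` of each `F_i`; every neighbour of `v_i` lies in `F_i`. Fix a set `P` of
indices and `k ∉ P`. Modulo `(y_i : i ∈ P)` one may substitute `x_{v_i} ↦ -∑_{j ∈ F_i ∖ v_i} x_j`
for `i ∈ P`. This substitution kills the `y_i` with `i ∈ P`, fixes `y_k`, and maps `I(G)` into the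
monomial ideal `J_P` generated by the edges avoiding `v(P)` and the squares `x_w²`,
`w ∈ F_i ∖ v_i`; conversely `J_P ⊆ I(G) + (y_i : i ∈ P)`. Hence `y_k` is a nonzerodivisor modulo
`I(G) + (y_i : i ∈ P)` as soon as it is one modulo `J_P`, and that is a monomial computation:
`J_P` contains every `x_a x_b` with `a ≠ b` in `F_k`, its generators are squarefree on `F_k`, and
those divisible by `x_{v_k}` involve a second variable of `F_k`.
-/

namespace Ideal

variable {R : Type*} [CommRing R]

theorem ofList_take_ofFn {m : ℕ} (y : Fin m → R) (k : Fin m) :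
    ofList ((List.ofFn y).take k) = span (y '' Set.Iio k) := by
  rw [ofList, ← Fin.ofFn_take_eq_take_ofFn k.is_le']
  congr 1
  ext r
  simp only [Set.mem_ofPred_eq, List.mem_ofFn', Set.mem_range, Fin.take, Set.mem_image,
    Set.mem_Iio]
  constructor
  · rintro ⟨i, rfl⟩
    exact ⟨_, Fin.lt_def.mpr i.is_lt, rfl⟩
  · rintro ⟨i, hi, rfl⟩
    exact ⟨⟨i, hi⟩, rfl⟩

theorem mem_sup_of_mul_mem_sup {Φ : Type*} [FunLike Φ R R] [RingHomClass Φ R R] (ψ : Φ)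
    {I Y J : Ideal R} (hY : Y ≤ RingHom.ker ψ) (hψ : ∀ r, r - ψ r ∈ Y) (hIJ : I.map ψ ≤ J)
    (hJ : J ≤ I ⊔ Y) {y : R} (hy : ψ y = y) (hreg : ∀ f, y * f ∈ J → f ∈ J) {f : R}
    (hf : y * f ∈ I ⊔ Y) : f ∈ I ⊔ Y := by
  have hψf : y * ψ f ∈ J := by
    obtain ⟨a, ha, b, hb, hab⟩ := Submodule.mem_sup.mp hf
    rw [← hy, ← map_mul, ← hab, map_add, RingHom.mem_ker.mp (hY hb), add_zero]
    exact hIJ (mem_map_of_mem ψ ha)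
  simpa using add_mem (hJ (hreg _ hψf)) (mem_sup_right (hψ f))

end Ideal

open Ideal in
theorem RingTheory.Sequence.isRegular_ofFn_quotient_mk {R : Type*} [CommRing R] (I : Ideal R)
    {m : ℕ} (y : Fin m → R)
    (hreg : ∀ k f, y k * f ∈ I ⊔ span (y '' Set.Iio k) → f ∈ I ⊔ span (y '' Set.Iio k))
    (hne : I ⊔ span (Set.range y) ≠ ⊤) :
    IsRegular (R ⧸ I) (List.ofFn fun i => Ideal.Quotient.mk I (y i)) := by
  have hsmul : ∀ l : List R,
      ofList (l.map (Ideal.Quotient.mk I)) • (⊤ : Submodule (R ⧸ I) (R ⧸ I)) =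
        (ofList l).map (Ideal.Quotient.mk I) := by
    intro l
    rw [map_ofList, smul_eq_mul, mul_top]
  rw [show (List.ofFn fun i => Ideal.Quotient.mk I (y i)) = (List.ofFn y).map _ from
    (List.map_ofFn ..).symm]
  refine ⟨⟨fun k hk => ?_⟩, ?_⟩
  · rw [List.length_map, List.length_ofFn] at hk
    rw [← List.map_take, hsmul, isSMulRegular_quotient_iff_mem_of_smul_mem]
    intro x
    obtain ⟨f, rfl⟩ := Ideal.Quotient.mk_surjective x
    rw [List.getElem_map, smul_eq_mul, ← map_mul, mem_quotient_iff_mem_sup,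
      mem_quotient_iff_mem_sup, sup_comm, ofList_take_ofFn y ⟨k, hk⟩]
    simpa using hreg ⟨k, hk⟩ f
  · rw [hsmul]
    intro htop
    have h1 : Ideal.Quotient.mk I 1 ∈ (ofList (List.ofFn y)).map (Ideal.Quotient.mk I) :=
      htop ▸ trivial
    rw [mem_quotient_iff_mem_sup, sup_comm, ofList] at h1
    simp only [List.mem_ofFn', Set.ofPred_mem_eq] at h1
    exact hne ((eq_top_iff_one _).mpr h1)

namespace MvPolynomial

variable {R σ : Type*} [CommSemiring R]

theorem X_mul_X_eq_monomial (a b : σ) :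
    (X a * X b : MvPolynomial σ R) = monomial (Finsupp.single a 1 + Finsupp.single b 1) 1 := by
  rw [monomial_single_add, pow_one]
  rfl

theorem coeff_add_single_mul_sum_X [DecidableEq σ] {s : Finset σ} {w : σ} (hw : w ∈ s)
    {e : σ →₀ ℕ} (he : ∀ j ∈ s, j ≠ w → e j = 0) (f : MvPolynomial σ R) :
    coeff (e + Finsupp.single w 1) ((∑ j ∈ s, X j) * f) = coeff e f := by
  rw [mul_comm, Finset.mul_sum, coeff_sum, Finset.sum_eq_single_of_mem w hw]
  · rw [coeff_mul_X', if_pos (by simp), add_tsub_cancel_right]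
  · intro j hj hjw
    rw [coeff_mul_X', if_neg]
    simp [he j hj hjw, Ne.symm hjw]

theorem mem_span_monomial_of_sum_X_mul_mem {D : Set (σ →₀ ℕ)} {s : Finset σ} {v : σ}
    (hv : v ∈ s)
    (hpair : ∀ a ∈ s, ∀ b ∈ s, a ≠ b → Finsupp.single a 1 + Finsupp.single b 1 ∈ D)
    (hsqfree : ∀ d ∈ D, ∀ w ∈ s, d w ≤ 1)
    (hfree : ∀ d ∈ D, d v ≠ 0 → ∃ b ∈ s, b ≠ v ∧ d b ≠ 0) {f : MvPolynomial σ R}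
    (hf : (∑ j ∈ s, X j) * f ∈ Ideal.span ((monomial · (1 : R)) '' D)) :
    f ∈ Ideal.span ((monomial · (1 : R)) '' D) := by
  classical
  rw [mem_ideal_span_monomial_image] at hf ⊢
  intro e he
  by_contra! hbad
  -- `w` is the variable of `s` dividing `e` (unique by `hpair`), or `v` if there is none; then
  -- the coefficient of `e + single w 1` in `(∑ x_j) * f` is that of `e` in `f`.
  obtain ⟨w, hws, hsupp, hdw⟩ : ∃ w ∈ s, (∀ j ∈ s, j ≠ w → e j = 0) ∧
      ∀ d ∈ D, d ≤ e + Finsupp.single w 1 → d w ≤ e w := by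
    by_cases hmeet : ∃ w ∈ s, e w ≠ 0
    · obtain ⟨w, hws, hew⟩ := hmeet
      refine ⟨w, hws, fun j hjs hjw => ?_, fun d hd _ => (hsqfree d hd w hws).trans (by omega)⟩
      by_contra hej
      refine hbad _ (hpair j hjs w hws hjw) fun u => ?_
      simp only [Finsupp.add_apply, Finsupp.single_apply]
      split_ifs <;> grind
    · push Not at hmeet
      refine ⟨v, hv, fun j hjs _ => hmeet j hjs, fun d hd hdle => ?_⟩
      by_contra! hlt
      obtain ⟨b, hbs, hbv, hdb⟩ := hfree d hd (by omega)
      have hdb' := hdle b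
      simp [Ne.symm hbv, hmeet b hbs] at hdb'
      exact hdb hdb'
  obtain ⟨d, hd, hdle⟩ := hf (e + Finsupp.single w 1) <| mem_support_iff.mpr <| by
    rw [coeff_add_single_mul_sum_X hws hsupp]
    exact mem_support_iff.mp he
  refine hbad d hd fun u => ?_
  rcases eq_or_ne u w with rfl | huw
  · exact hdw d hd hdle
  · simpa [Finsupp.single_apply, Ne.symm huw] using hdle u

end MvPolynomial

namespace SimpleGraph

variable {V : Type*} [Finite V] {G : SimpleGraph V}

theorem exists_isFacet_superset {C : Finset V} (hC : G.IsClique (C : Set V)) :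
    ∃ F, G.IsFacet F ∧ C ⊆ F := by
  obtain ⟨F, hCF, hmax⟩ := Finite.exists_le_maximal (p := fun F : Finset V => G.IsClique F) hC
  exact ⟨F, ⟨hmax.prop, fun F' hF' hFF' => le_antisymm (hmax.2 hF' hFF') hFF'⟩, hCF⟩

theorem IsFreeVertex.mem_of_adj {F : Finset V} {v w : V} (hv : G.IsFreeVertex F v)
    (hvw : G.Adj v w) : w ∈ F := by
  classical
  obtain ⟨F', hF', hsub⟩ := exists_isFacet_superset (C := {v, w}) <| by
    rw [Finset.coe_pair, isClique_pair]
    exact fun _ => hvw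
  rw [← hv.2 F' hF' (hsub (by simp))]
  exact hsub (by simp)

end SimpleGraph

open Function

theorem Finset.eq_of_mem_of_pairwise_disjoint {ι α : Type*} {F : ι → Finset α}
    (hdisj : Pairwise (Disjoint on F)) {i j : ι} {a : α} (hi : a ∈ F i) (hj : a ∈ F j) :
    i = j := by
  by_contra hij
  exact Finset.disjoint_left.mp (hdisj hij) hi hj

section FreeVertexElimination

variable {K σ ι : Type*} [CommRing K] {F : ι → Finset σ} {v : ι → σ}

theorem mem_image_iff_of_pairwise_disjoint (hvF : ∀ i, v i ∈ F i)
    (hdisj : Pairwise (Disjoint on F)) {P : Set ι} {i : ι} {j : σ} (hj : j ∈ F i) :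
    j ∈ v '' P ↔ i ∈ P ∧ j = v i := by
  constructor
  · rintro ⟨i', hi', rfl⟩
    obtain rfl := Finset.eq_of_mem_of_pairwise_disjoint hdisj hj (hvF i')
    exact ⟨hi', rfl⟩
  · rintro ⟨hi, rfl⟩
    exact ⟨i, hi, rfl⟩

variable [DecidableEq σ]

variable (K F v) in
/-- Since the `v i` are distinct, this sends `x_{v_i}` (`i ∈ P`) to `x_{v_i} - y_i` and fixes the
other variables. -/
noncomputable def eliminateFreeVertices (P : Finset ι) :
    MvPolynomial σ K →ₐ[K] MvPolynomial σ K :=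
  aeval fun u => X u - ∑ i ∈ P, if v i = u then ∑ j ∈ F i, X j else 0

theorem eliminateFreeVertices_X_of_notMem {P : Finset ι} {u : σ} (hu : u ∉ v '' P) :
    eliminateFreeVertices K F v P (X u) = X u := by
  rw [eliminateFreeVertices, aeval_X, sub_eq_self]
  exact Finset.sum_eq_zero fun i hi => if_neg fun h => hu ⟨i, hi, h⟩

theorem eliminateFreeVertices_X_self (hvF : ∀ i, v i ∈ F i) (hdisj : Pairwise (Disjoint on F))
    {P : Finset ι} {i : ι} (hi : i ∈ P) :
    eliminateFreeVertices K F v P (X (v i)) = -∑ j ∈ (F i).erase (v i), X j := by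
  rw [eliminateFreeVertices, aeval_X, Finset.sum_eq_single_of_mem i hi, if_pos rfl,
    ← Finset.add_sum_erase _ _ (hvF i)]
  · ring
  · intro i' _ hi'i
    refine if_neg fun h => hi'i (Finset.eq_of_mem_of_pairwise_disjoint hdisj (hvF i') ?_)
    rw [h]
    exact hvF i

theorem sub_eliminateFreeVertices_mem (P : Finset ι) (p : MvPolynomial σ K) :
    p - eliminateFreeVertices K F v P p ∈ Ideal.span ((fun i => ∑ j ∈ F i, X j) '' P) := by
  set Y := Ideal.span ((fun i => ∑ j ∈ F i, (X j : MvPolynomial σ K)) '' P)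
  suffices Ideal.Quotient.mkₐ K Y =
      (Ideal.Quotient.mkₐ K Y).comp (eliminateFreeVertices K F v P) by
    rw [← Ideal.Quotient.eq]
    exact AlgHom.congr_fun this p
  refine MvPolynomial.algHom_ext fun u => ?_
  rw [AlgHom.comp_apply, Ideal.Quotient.mkₐ_eq_mk, Ideal.Quotient.eq, eliminateFreeVertices,
    aeval_X, sub_sub_cancel]
  refine Ideal.sum_mem _ fun i hi => ?_
  split_ifs
  · exact Ideal.subset_span ⟨i, hi, rfl⟩
  · exact zero_mem _

theorem eliminateFreeVertices_sum_X_of_mem (hvF : ∀ i, v i ∈ F i)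
    (hdisj : Pairwise (Disjoint on F)) {P : Finset ι} {i : ι} (hi : i ∈ P) :
    eliminateFreeVertices K F v P (∑ j ∈ F i, X j) = 0 := by
  rw [map_sum, ← Finset.add_sum_erase _ _ (hvF i), eliminateFreeVertices_X_self hvF hdisj hi,
    neg_add_eq_zero]
  refine Finset.sum_congr rfl fun j hj => (eliminateFreeVertices_X_of_notMem ?_).symm
  rw [mem_image_iff_of_pairwise_disjoint hvF hdisj (Finset.mem_of_mem_erase hj)]
  exact fun h => Finset.ne_of_mem_erase hj h.2

theorem eliminateFreeVertices_sum_X_of_notMem (hvF : ∀ i, v i ∈ F i)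
    (hdisj : Pairwise (Disjoint on F)) {P : Finset ι} {i : ι} (hi : i ∉ P) :
    eliminateFreeVertices K F v P (∑ j ∈ F i, X j) = ∑ j ∈ F i, X j := by
  rw [map_sum]
  refine Finset.sum_congr rfl fun j hj => eliminateFreeVertices_X_of_notMem ?_
  rw [mem_image_iff_of_pairwise_disjoint hvF hdisj hj]
  exact fun h => hi h.1

end FreeVertexElimination

section EdgeIdeal

variable {K ι : Type*} [CommRing K] {n : ℕ} {G : SimpleGraph (Fin n)}
  {F : ι → Finset (Fin n)} {v : ι → Fin n}

variable (G F v) in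
/-- The exponents of the generators of `J_P`. -/
def eliminationExponents (P : Finset ι) : Set (Fin n →₀ ℕ) :=
  {d | ∃ a b, G.Adj a b ∧ a ∉ v '' P ∧ b ∉ v '' P ∧
    d = Finsupp.single a 1 + Finsupp.single b 1} ∪
  {d | ∃ i ∈ P, ∃ w ∈ F i, w ≠ v i ∧ d = Finsupp.single w 2}

theorem map_eliminateFreeVertices_edgeIdeal_le (hclique : ∀ i, G.IsClique (F i : Set (Fin n)))
    (hnbhd : ∀ i w, G.Adj (v i) w → w ∈ F i) (hvF : ∀ i, v i ∈ F i)
    (hdisj : Pairwise (Disjoint on F)) (P : Finset ι) :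
    (edgeIdeal K G).map (eliminateFreeVertices K F v P) ≤
      Ideal.span ((monomial · (1 : K)) '' eliminationExponents G F v P) := by
  set ψ := eliminateFreeVertices K F v P
  set J : Ideal (MvPolynomial (Fin n) K) :=
    Ideal.span ((monomial · 1) '' eliminationExponents G F v P)
  have hmem : ∀ d ∈ eliminationExponents G F v P, monomial d 1 ∈ J :=
    fun d hd => Ideal.subset_span ⟨d, hd, rfl⟩
  have hedge : ∀ a b, G.Adj a b → a ∉ v '' P → b ∉ v '' P → X a * X b ∈ J := by
    intro a b hab ha hb
    rw [X_mul_X_eq_monomial]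
    exact hmem _ (Or.inl ⟨a, b, hab, ha, hb, rfl⟩)
  have hfree : ∀ i ∈ P, ∀ b, G.Adj (v i) b → ψ (X (v i)) * ψ (X b) ∈ J := by
    intro i hi b hib
    have hbF := hnbhd i b hib
    have hbP : b ∉ v '' P := by
      rw [mem_image_iff_of_pairwise_disjoint hvF hdisj hbF]
      exact fun h => hib.ne h.2.symm
    rw [eliminateFreeVertices_X_self hvF hdisj hi, eliminateFreeVertices_X_of_notMem hbP,
      neg_mul, Finset.sum_mul]
    refine neg_mem (Ideal.sum_mem _ fun j hj => ?_)
    obtain ⟨hjv, hjF⟩ := Finset.mem_erase.mp hj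
    rcases eq_or_ne j b with rfl | hjb
    · rw [← sq, X_pow_eq_monomial]
      exact hmem _ (Or.inr ⟨i, hi, j, hjF, hjv, rfl⟩)
    · refine hedge j b (hclique i hjF hbF hjb) ?_ hbP
      rw [mem_image_iff_of_pairwise_disjoint hvF hdisj hjF]
      exact fun h => hjv h.2
  rw [edgeIdeal, Ideal.map_span, Ideal.span_le]
  rintro _ ⟨_, ⟨a, b, hab, rfl⟩, rfl⟩
  rw [map_mul]
  by_cases ha : a ∈ v '' P
  · obtain ⟨i, hi, rfl⟩ := ha
    exact hfree i hi b hab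
  by_cases hb : b ∈ v '' P
  · obtain ⟨i, hi, rfl⟩ := hb
    rw [mul_comm]
    exact hfree i hi a hab.symm
  rw [eliminateFreeVertices_X_of_notMem ha, eliminateFreeVertices_X_of_notMem hb]
  exact hedge a b hab ha hb

theorem span_eliminationExponents_le (hclique : ∀ i, G.IsClique (F i : Set (Fin n)))
    (P : Finset ι) :
    Ideal.span ((monomial · (1 : K)) '' eliminationExponents G F v P) ≤
      edgeIdeal K G ⊔ Ideal.span ((fun i => ∑ j ∈ F i, X j) '' P) := by
  rw [Ideal.span_le]
  rintro _ ⟨d, hd | hd, rfl⟩ <;> dsimp only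
  · obtain ⟨a, b, hab, -, -, rfl⟩ := hd
    rw [SetLike.mem_coe, ← X_mul_X_eq_monomial]
    exact Ideal.mem_sup_left (Ideal.subset_span ⟨a, b, hab, rfl⟩)
  · obtain ⟨i, hi, w, hwF, -, rfl⟩ := hd
    have hsq : (X w ^ 2 : MvPolynomial (Fin n) K) =
        X w * ∑ j ∈ F i, X j - ∑ j ∈ (F i).erase w, X w * X j := by
      rw [Finset.mul_sum, ← Finset.add_sum_erase _ _ hwF]
      ring
    rw [SetLike.mem_coe, ← X_pow_eq_monomial, hsq]
    refine sub_mem (Ideal.mem_sup_right (Ideal.mul_mem_left _ _ (Ideal.subset_span ⟨i, hi, rfl⟩)))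
      (Ideal.mem_sup_left (Ideal.sum_mem _ fun j hj => Ideal.subset_span ⟨w, j, ?_, rfl⟩))
    exact hclique i hwF (Finset.mem_of_mem_erase hj) (Finset.ne_of_mem_erase hj).symm

theorem single_add_single_mem_eliminationExponents
    (hclique : ∀ i, G.IsClique (F i : Set (Fin n))) (hvF : ∀ i, v i ∈ F i)
    (hdisj : Pairwise (Disjoint on F)) {P : Finset ι} {k : ι} (hk : k ∉ P) {a b : Fin n}
    (ha : a ∈ F k) (hb : b ∈ F k) (hab : a ≠ b) :
    Finsupp.single a 1 + Finsupp.single b 1 ∈ eliminationExponents G F v P := by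
  refine Or.inl ⟨a, b, hclique k ha hb hab, ?_, ?_, rfl⟩ <;>
    rw [mem_image_iff_of_pairwise_disjoint hvF hdisj ‹_›] <;> exact fun h => hk h.1

theorem eliminationExponents_apply_le_one (hdisj : Pairwise (Disjoint on F)) {P : Finset ι}
    {k : ι} (hk : k ∉ P) {d : Fin n →₀ ℕ}
    (hd : d ∈ eliminationExponents G F v P) {w : Fin n} (hw : w ∈ F k) : d w ≤ 1 := by
  rcases hd with ⟨a, b, hab, -, -, rfl⟩ | ⟨i, hi, u, huF, -, rfl⟩
  · simp only [Finsupp.add_apply, Finsupp.single_apply]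
    split_ifs <;> grind [hab.ne]
  · have huw : u ≠ w := by
      rintro rfl
      exact hk (Finset.eq_of_mem_of_pairwise_disjoint hdisj huF hw ▸ hi)
    simp [huw]

theorem exists_ne_of_eliminationExponents_apply_ne_zero (hnbhd : ∀ i w, G.Adj (v i) w → w ∈ F i)
    (hvF : ∀ i, v i ∈ F i) (hdisj : Pairwise (Disjoint on F)) {P : Finset ι} {k : ι}
    (hk : k ∉ P) {d : Fin n →₀ ℕ} (hd : d ∈ eliminationExponents G F v P) (hdv : d (v k) ≠ 0) :
    ∃ b ∈ F k, b ≠ v k ∧ d b ≠ 0 := by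
  rcases hd with ⟨a, b, hab, -, -, rfl⟩ | ⟨i, hi, u, huF, -, rfl⟩
  · rcases eq_or_ne a (v k) with rfl | hav
    · exact ⟨b, hnbhd k b hab, hab.ne', by simp [hab.ne]⟩
    rcases eq_or_ne b (v k) with rfl | hbv
    · exact ⟨a, hnbhd k a hab.symm, hab.ne, by simp [hab.ne']⟩
    simp [hav.symm, hbv.symm] at hdv
  · obtain rfl : u = v k := by
      by_contra huv
      simp [huv] at hdv
    exact absurd (Finset.eq_of_mem_of_pairwise_disjoint hdisj huF (hvF k) ▸ hi) hk

theorem mem_edgeIdeal_sup_span_of_sum_X_mul_mem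
    (hclique : ∀ i, G.IsClique (F i : Set (Fin n))) (hnbhd : ∀ i w, G.Adj (v i) w → w ∈ F i)
    (hvF : ∀ i, v i ∈ F i) (hdisj : Pairwise (Disjoint on F)) {P : Finset ι} {k : ι}
    (hk : k ∉ P) {f : MvPolynomial (Fin n) K}
    (hf : (∑ j ∈ F k, X j) * f ∈ edgeIdeal K G ⊔ Ideal.span ((fun i => ∑ j ∈ F i, X j) '' P)) :
    f ∈ edgeIdeal K G ⊔ Ideal.span ((fun i => ∑ j ∈ F i, X j) '' P) := by
  refine Ideal.mem_sup_of_mul_mem_sup (eliminateFreeVertices K F v P) ?_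
    (sub_eliminateFreeVertices_mem P)
    (map_eliminateFreeVertices_edgeIdeal_le hclique hnbhd hvF hdisj P)
    (span_eliminationExponents_le hclique P)
    (eliminateFreeVertices_sum_X_of_notMem hvF hdisj hk) (fun g hg => ?_) hf
  · rw [Ideal.span_le]
    rintro _ ⟨i, hi, rfl⟩
    exact eliminateFreeVertices_sum_X_of_mem hvF hdisj hi
  · exact mem_span_monomial_of_sum_X_mul_mem (hvF k)
      (fun a ha b hb hab =>
        single_add_single_mem_eliminationExponents hclique hvF hdisj hk ha hb hab)
      (fun d hd w hw => eliminationExponents_apply_le_one hdisj hk hd hw)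
      (fun d hd hdv => exists_ne_of_eliminationExponents_apply_ne_zero hnbhd hvF hdisj hk hd hdv)
      hg

theorem edgeIdeal_sup_span_sum_X_ne_top [Nontrivial K] (G : SimpleGraph (Fin n))
    (F : ι → Finset (Fin n)) :
    edgeIdeal K G ⊔ Ideal.span (Set.range fun i => ∑ j ∈ F i, X j) ≠ ⊤ := by
  refine ne_top_of_le_ne_top (RingHom.ker_ne_top (constantCoeff (σ := Fin n) (R := K)))
    (sup_le (Ideal.span_le.mpr ?_) (Ideal.span_le.mpr ?_))
  · rintro _ ⟨a, b, -, rfl⟩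
    simp
  · rintro _ ⟨i, rfl⟩
    simp

end EdgeIdeal

theorem sums_form_regular_sequence_general (K : Type*) [Field K] {n : ℕ} (G : SimpleGraph (Fin n))
    {m : ℕ} (F : Fin m → Finset (Fin n))
    (hFfree : ∀ i, G.IsFreeFacet (F i))
    (hdisj : ∀ i j, i ≠ j → Disjoint (F i) (F j)) :
    RingTheory.Sequence.IsRegular (MvPolynomial (Fin n) K ⧸ edgeIdeal K G)
      (List.ofFn fun i : Fin m =>
        Ideal.Quotient.mk (edgeIdeal K G) (∑ j ∈ F i, X j)) := by
  choose v hv using fun i => (hFfree i).2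
  refine RingTheory.Sequence.isRegular_ofFn_quotient_mk _ _ (fun k f hf => ?_)
    (edgeIdeal_sup_span_sum_X_ne_top G F)
  rw [← Finset.coe_Iio] at hf ⊢
  exact mem_edgeIdeal_sup_span_of_sum_X_mul_mem (fun i => (hFfree i).1.1)
    (fun i _ => (hv i).mem_of_adj) (fun i => (hv i).1) (fun i j => hdisj i j)
    Finset.notMem_Iio_self hf

/-- If `G` is a chordal graph on `[n]` such that `[n]` is the disjoint
union of the facets `F_1,…,F_m` of `Δ(G)` admitting a free vertex, then the elements
`y_i = ∑_{j ∈ F_i} x_j`, `i = 1,…,m`, form a regular sequence on `K[x_1,…,x_n]/I(G)`. -/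
theorem sums_form_regular_sequence (K : Type*) [Field K] {n : ℕ} (G : SimpleGraph (Fin n))
    (hchordal : G.IsChordal) (hiso : ∀ v : Fin n, ∃ w, G.Adj v w)
    {m : ℕ} (F : Fin m → Finset (Fin n))
    (hFfree : ∀ i, G.IsFreeFacet (F i)) (hFinj : Function.Injective F)
    (hFall : ∀ F' : Finset (Fin n), G.IsFreeFacet F' → ∃ i, F' = F i)
    (hdisj : ∀ i j, i ≠ j → Disjoint (F i) (F j))
    (hcover : ∀ v : Fin n, ∃ i, v ∈ F i) :
    RingTheory.Sequence.IsRegular (MvPolynomial (Fin n) K ⧸ edgeIdeal K G)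
      (List.ofFn fun i : Fin m =>
        Ideal.Quotient.mk (edgeIdeal K G) (∑ j ∈ F i, X j)) :=
  sums_form_regular_sequence_general K G F hFfree hdisj
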